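/- arXiv:2308.15746 — 3 statements merged into one kernel-verified Lean document; each statement's English description precedes it below -/
import Mathlib

section
/- Let x_1, …, x_n be real-valued random variables taking values in [−1, 1] that are d-wise independent with E[x_i] = 0 for each i, where d is even. Let X_n = ∑_{i=1}^n x_i and δ = d/n. Then for any ε > 0, Pr(|X_n| ≥ εn) ≤ 4√(πd) · (δ/(ε²e))^{δn/2}. -/
open MeasureTheory ProbabilityTheory

section Aux

variable {Ω : Type*} [MeasurableSpace Ω] {μ : Measure Ω}

lemma aux_integrable [IsFiniteMeasure μ] {g : Ω → ℝ} (hg : AEStronglyMeasurable g μ)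
    {C : ℝ} (h : ∀ᵐ ω ∂μ, |g ω| ≤ C) : Integrable g μ :=
  (integrable_const C).mono' hg (by simpa [Real.norm_eq_abs] using h)

lemma aux_indep_prod {ι : Type*} [IsProbabilityMeasure μ] (f : ι → Ω → ℝ)
    (hm : ∀ i, Measurable (f i)) (hb : ∀ᵐ ω ∂μ, ∀ i, |f i ω| ≤ 1)
    (hi : iIndepFun f μ) (s : Finset ι) :
    ∫ ω, ∏ i ∈ s, f i ω ∂μ = ∏ i ∈ s, ∫ ω, f i ω ∂μ := by
  classical
  induction s using Finset.induction with
  | empty => simp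
  | @insert a s ha ih =>
    have hbs : ∀ᵐ ω ∂μ, |∏ i ∈ s, f i ω| ≤ 1 := by
      filter_upwards [hb] with ω hω
      rw [Finset.abs_prod]
      exact Finset.prod_le_one (fun i _ => abs_nonneg _) (fun i _ => hω i)
    have hint : Integrable (fun ω => ∏ i ∈ s, f i ω) μ :=
      aux_integrable (Finset.measurable_prod s (fun i _ => hm i)).aestronglyMeasurable hbs
    have hinta : Integrable (f a) μ :=
      aux_integrable (hm a).aestronglyMeasurable (by filter_upwards [hb] with ω hω using hω a)
    have hIF : IndepFun (∏ i ∈ s, f i) (f a) μ :=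
      hi.indepFun_finsetProd_of_notMem hm ha
    have hprodeq : (∏ i ∈ s, f i) = fun ω => ∏ i ∈ s, f i ω := by
      funext ω; simp [Finset.prod_apply]
    rw [hprodeq] at hIF
    calc ∫ ω, ∏ i ∈ insert a s, f i ω ∂μ
        = ∫ ω, (fun ω => ∏ i ∈ s, f i ω) ω * f a ω ∂μ := by
          congr 1; funext ω; rw [Finset.prod_insert ha]; ring
      _ = (∫ ω, ∏ i ∈ s, f i ω ∂μ) * ∫ ω, f a ω ∂μ := by
          have := hIF.integral_mul_eq_mul_integral hint.1 hinta.1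
          simpa [Pi.mul_apply] using this
      _ = ∏ i ∈ insert a s, ∫ ω, f i ω ∂μ := by
          rw [Finset.prod_insert ha, ih]; ring

lemma aux_pi_integral {ι : Type*} [Fintype ι] (m : ι → Measure ℝ)
    [∀ i, IsProbabilityMeasure (m i)] (g : ι → ℝ → ℝ) :
    ∫ y : ι → ℝ, ∏ i, g i (y i) ∂(Measure.pi m) = ∏ i, ∫ t, g i t ∂(m i) :=
  MeasureTheory.integral_fintype_prod_eq_prod (E := fun _ => ℝ) g (μ := m)

lemma aux_pi_integrable {ι : Type*} [Fintype ι] (m : ι → Measure ℝ)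
    [∀ i, IsProbabilityMeasure (m i)] (g : ι → ℝ → ℝ) (hg : ∀ i, Integrable (g i) (m i)) :
    Integrable (fun y : ι → ℝ => ∏ i, g i (y i)) (Measure.pi m) :=
  MeasureTheory.Integrable.fintype_prod_dep (E := fun _ => ℝ) (f := g) (μ := m) hg

lemma aux_mgf (m : Measure ℝ) [IsProbabilityMeasure m]
    (hs : ∀ᵐ s ∂m, s ∈ Set.Icc (-1 : ℝ) 1) (h0 : ∫ s, s ∂m = 0) (t : ℝ) :
    ∫ s, Real.exp (t * s) ∂m ≤ Real.cosh t := by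
  have hint1 : Integrable (fun s : ℝ => s) m :=
    aux_integrable measurable_id'.aestronglyMeasurable
      (by filter_upwards [hs] with s h using abs_le.2 ⟨h.1, h.2⟩)
  have key : ∀ᵐ s ∂m, Real.exp (t * s) ≤ Real.cosh t + Real.sinh t * s := by
    filter_upwards [hs] with s h
    have h1 : (0:ℝ) ≤ (1 - s)/2 := by linarith [h.2]
    have h2 : (0:ℝ) ≤ (1 + s)/2 := by linarith [h.1]
    have hc := convexOn_exp.2 (Set.mem_univ (-t)) (Set.mem_univ t) h1 h2 (by ring)
    simp only [smul_eq_mul] at hc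
    calc Real.exp (t * s) = Real.exp ((1 - s)/2 * (-t) + (1 + s)/2 * t) := by ring_nf
      _ ≤ (1 - s)/2 * Real.exp (-t) + (1 + s)/2 * Real.exp t := hc
      _ = Real.cosh t + Real.sinh t * s := by rw [Real.cosh_eq, Real.sinh_eq]; ring
  have hintl : Integrable (fun s => Real.exp (t * s)) m := by
    apply aux_integrable ((measurable_id.const_mul t).exp).aestronglyMeasurable
      (C := Real.exp |t|)
    filter_upwards [hs] with s h
    rw [abs_of_nonneg (Real.exp_pos _).le]
    apply Real.exp_le_exp.2
    calc t * s ≤ |t * s| := le_abs_self _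
      _ = |t| * |s| := abs_mul t s
      _ ≤ |t| * 1 := by
          have := abs_le.2 ⟨h.1, h.2⟩
          exact mul_le_mul_of_nonneg_left this (abs_nonneg t)
      _ = |t| := mul_one _
  have hintr : Integrable (fun s => Real.cosh t + Real.sinh t * s) m :=
    (integrable_const _).add (hint1.const_mul _)
  calc ∫ s, Real.exp (t * s) ∂m ≤ ∫ s, (Real.cosh t + Real.sinh t * s) ∂m :=
        integral_mono_ae hintl hintr key
    _ = Real.cosh t + Real.sinh t * ∫ s, s ∂m := by
        rw [integral_add (integrable_const _) (hint1.const_mul _), integral_const,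
          integral_const_mul]
        simp
    _ = Real.cosh t := by rw [h0]; ring

lemma aux_factorial_le (d : ℕ) (hd : 0 < d) :
    (d.factorial : ℝ) ≤ 2 * Real.sqrt Real.pi * Real.sqrt d * ((d : ℝ)/Real.exp 1)^d := by
  have hd0 : (0:ℝ) < d := Nat.cast_pos.2 hd
  have hden : (0:ℝ) < Real.sqrt (2 * d) * ((d : ℝ)/Real.exp 1)^d := by positivity
  have hs : Stirling.stirlingSeq d ≤ Real.exp 1 / Real.sqrt 2 := by
    have h1 : Stirling.stirlingSeq d = (Stirling.stirlingSeq ∘ Nat.succ) (d - 1) := by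
      simp only [Function.comp_apply]
      congr 1
      omega
    have h2 := Stirling.stirlingSeq'_antitone (Nat.zero_le (d - 1))
    rw [h1]
    calc (Stirling.stirlingSeq ∘ Nat.succ) (d - 1) ≤ (Stirling.stirlingSeq ∘ Nat.succ) 0 := h2
      _ = Real.exp 1 / Real.sqrt 2 := by
          simp [Function.comp, Stirling.stirlingSeq_one]
  have hfact : (d.factorial : ℝ) =
      Stirling.stirlingSeq d * (Real.sqrt (2 * d) * ((d : ℝ)/Real.exp 1)^d) := by
    rw [Stirling.stirlingSeq, div_mul_cancel₀ _ hden.ne']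
  have hsqrt2 : Real.sqrt (2 * (d:ℝ)) = Real.sqrt 2 * Real.sqrt d :=
    Real.sqrt_mul (by norm_num) _
  have he : Real.exp 1 ≤ 2 * Real.sqrt Real.pi := by
    nlinarith [Real.sq_sqrt (le_of_lt Real.pi_pos), Real.pi_gt_three,
      Real.sqrt_nonneg Real.pi, Real.exp_one_lt_d9, Real.exp_pos 1]
  have h2pos : (0:ℝ) < Real.sqrt 2 := by positivity
  calc (d.factorial : ℝ)
      = Stirling.stirlingSeq d * (Real.sqrt (2 * d) * ((d : ℝ)/Real.exp 1)^d) := hfact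
    _ ≤ (Real.exp 1 / Real.sqrt 2) * (Real.sqrt (2 * d) * ((d : ℝ)/Real.exp 1)^d) :=
        mul_le_mul_of_nonneg_right hs hden.le
    _ = Real.exp 1 * Real.sqrt d * ((d : ℝ)/Real.exp 1)^d := by
        rw [hsqrt2]; field_simp
    _ ≤ 2 * Real.sqrt Real.pi * Real.sqrt d * ((d : ℝ)/Real.exp 1)^d := by
        have : (0:ℝ) ≤ Real.sqrt d * ((d : ℝ)/Real.exp 1)^d := by positivity
        nlinarith [this]

end Aux

theorem stmt10 {Ω : Type*} [MeasurableSpace Ω] (μ : Measure Ω) [IsProbabilityMeasure μ]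
    (n d : ℕ) (hdeven : Even d) (hd : 0 < d) (hdn : d ≤ n)
    (x : Fin n → Ω → ℝ) (hmeas : ∀ i, Measurable (x i))
    (hbdd : ∀ i, ∀ᵐ ω ∂μ, x i ω ∈ Set.Icc (-1 : ℝ) 1)
    (hmean : ∀ i, ∫ ω, x i ω ∂μ = 0)
    (hind : ∀ T : Finset (Fin n), T.card ≤ d →
      iIndepFun (fun i : T => x i.1) μ)
    (δ ε : ℝ) (hδ : δ = (d : ℝ) / n) (hε : 0 < ε) :
    μ {ω | ε * n ≤ |∑ i, x i ω|}
      ≤ ENNReal.ofReal (4 * Real.sqrt (Real.pi * d)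
          * (δ / (ε ^ 2 * Real.exp 1)) ^ ((δ * n) / 2 : ℝ)) := by
  classical
  obtain ⟨k, hk⟩ := hdeven
  have hk' : d = 2 * k := by omega
  have hk0 : 0 < k := by omega
  have hn0 : 0 < n := by omega
  have hnR : (0:ℝ) < n := by exact_mod_cast hn0
  have hdR : (0:ℝ) < d := by exact_mod_cast hd
  have hd2k : (d:ℝ) = 2 * k := by rw [hk']; push_cast; ring
  have heven : Even d := ⟨k, hk⟩
  -- marginals
  set μi : Fin n → Measure ℝ := fun i => μ.map (x i) with hμi
  haveI hprob : ∀ i, IsProbabilityMeasure (μi i) := fun i =>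
    Measure.isProbabilityMeasure_map (hmeas i).aemeasurable
  have hai : ∀ i, ∀ᵐ s ∂(μi i), s ∈ Set.Icc (-1:ℝ) 1 := fun i =>
    (ae_map_iff (hmeas i).aemeasurable measurableSet_Icc).2 (hbdd i)
  have habs : ∀ i, ∀ᵐ s ∂(μi i), |s| ≤ 1 := fun i =>
    (hai i).mono (fun s h => abs_le.2 ⟨h.1, h.2⟩)
  have hmean' : ∀ i, ∫ s, s ∂(μi i) = 0 := fun i => by
    rw [hμi, integral_map (hmeas i).aemeasurable measurable_id'.aestronglyMeasurable]
    exact hmean i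
  have hmom : ∀ (i : Fin n) (c : ℕ), ∫ s, s ^ c ∂(μi i) = ∫ ω, (x i ω) ^ c ∂μ := fun i c => by
    rw [hμi, integral_map (hmeas i).aemeasurable (measurable_id'.pow_const c).aestronglyMeasurable]
  have hball : ∀ᵐ ω ∂μ, ∀ i, |x i ω| ≤ 1 :=
    (ae_all_iff).2 (fun i => (hbdd i).mono (fun ω h => abs_le.2 ⟨h.1, h.2⟩))
  set m : (Fin d → Fin n) → Fin n → ℕ :=
    fun f v => (Finset.univ.filter (fun j => f j = v)).card with hm
  -- pointwise expansion
  have point : ∀ (y : Fin n → ℝ),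
      (∑ i, y i) ^ d = ∑ f : Fin d → Fin n, ∏ v, (y v) ^ (m f v) := by
    intro y
    rw [Fintype.sum_pow]
    refine Finset.sum_congr rfl (fun f _ => ?_)
    calc ∏ j, y (f j)
        = ∏ v, ∏ j ∈ Finset.univ.filter (fun j => f j = v), y (f j) :=
          (Finset.prod_fiberwise Finset.univ f (fun j => y (f j))).symm
      _ = ∏ v, (y v) ^ (m f v) := by
          refine Finset.prod_congr rfl (fun v _ => ?_)
          have h1 : ∀ j ∈ Finset.univ.filter (fun j => f j = v), y (f j) = y v := fun j hj => by
            rw [(Finset.mem_filter.1 hj).2]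
          rw [Finset.prod_congr rfl h1, Finset.prod_const]
  have hintf : ∀ f : Fin d → Fin n, Integrable (fun ω => ∏ v, (x v ω) ^ (m f v)) μ := by
    intro f
    apply aux_integrable
      (Finset.measurable_prod _ (fun v _ => (hmeas v).pow_const _)).aestronglyMeasurable (C := 1)
    filter_upwards [hball] with ω hω
    rw [Finset.abs_prod]
    exact Finset.prod_le_one (fun v _ => abs_nonneg _) (fun v _ => by
      rw [abs_pow]; exact pow_le_one₀ (abs_nonneg _) (hω v))
  have hfac : ∀ f : Fin d → Fin n,
      ∫ ω, ∏ v, (x v ω) ^ (m f v) ∂μ = ∏ v, ∫ s, s ^ (m f v) ∂(μi v) := by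
    intro f
    set T : Finset (Fin n) := Finset.univ.image f with hT
    have hTcard : T.card ≤ d := le_trans Finset.card_image_le (by simp)
    have hzero : ∀ v, v ∉ T → m f v = 0 := by
      intro v hv
      simp only [hm, Finset.card_eq_zero, Finset.filter_eq_empty_iff]
      intro j _
      exact fun h => hv (Finset.mem_image.2 ⟨j, Finset.mem_univ j, h⟩)
    have hiind : iIndepFun
        (fun i : T => fun ω => (x i.1 ω) ^ (m f i.1)) μ := by
      have := (hind T hTcard).comp (fun i s => s ^ (m f i.1))
        (fun i => measurable_id.pow_const _)
      exact this
    have hb2 : ∀ᵐ ω ∂μ, ∀ i : T, |(x i.1 ω) ^ (m f i.1)| ≤ 1 := by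
      filter_upwards [hball] with ω hω i
      rw [abs_pow]; exact pow_le_one₀ (abs_nonneg _) (hω i.1)
    have key := aux_indep_prod (fun i : T => fun ω => (x i.1 ω) ^ (m f i.1))
      (fun i => (hmeas i.1).pow_const _) hb2 hiind Finset.univ
    calc ∫ ω, ∏ v, (x v ω) ^ (m f v) ∂μ
        = ∫ ω, ∏ v ∈ T, (x v ω) ^ (m f v) ∂μ := by
          congr 1; funext ω
          exact (Finset.prod_subset (Finset.subset_univ T)
            (fun v _ hv => by rw [hzero v hv, pow_zero])).symm
      _ = ∫ ω, ∏ i : T, (x i.1 ω) ^ (m f i.1) ∂μ := by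
          congr 1; funext ω
          rw [Finset.prod_coe_sort T (fun v => (x v ω) ^ (m f v))]
      _ = ∏ i : T, ∫ ω, (x i.1 ω) ^ (m f i.1) ∂μ := key
      _ = ∏ v ∈ T, ∫ ω, (x v ω) ^ (m f v) ∂μ :=
          Finset.prod_coe_sort T (fun v => ∫ ω, (x v ω) ^ (m f v) ∂μ)
      _ = ∏ v ∈ T, ∫ s, s ^ (m f v) ∂(μi v) :=
          Finset.prod_congr rfl (fun v _ => (hmom v _).symm)
      _ = ∏ v, ∫ s, s ^ (m f v) ∂(μi v) :=
          Finset.prod_subset (Finset.subset_univ T) (fun v _ hv => by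
            rw [hzero v hv]
            simp [measure_univ])
  have expandμ : ∫ ω, (∑ i, x i ω) ^ d ∂μ
      = ∑ f : Fin d → Fin n, ∏ v, ∫ s, s ^ (m f v) ∂(μi v) := by
    calc ∫ ω, (∑ i, x i ω) ^ d ∂μ
        = ∫ ω, ∑ f : Fin d → Fin n, ∏ v, (x v ω) ^ (m f v) ∂μ := by
          congr 1; funext ω; exact point (fun i => x i ω)
      _ = ∑ f : Fin d → Fin n, ∫ ω, ∏ v, (x v ω) ^ (m f v) ∂μ :=
          integral_finset_sum _ (fun f _ => hintf f)
      _ = ∑ f : Fin d → Fin n, ∏ v, ∫ s, s ^ (m f v) ∂(μi v) :=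
          Finset.sum_congr rfl (fun f _ => hfac f)
  -- product measure side
  haveI : IsProbabilityMeasure (Measure.pi μi) := inferInstance
  have hginti : ∀ (v : Fin n) (c : ℕ), Integrable (fun s : ℝ => s ^ c) (μi v) := fun v c =>
    aux_integrable (measurable_id'.pow_const c).aestronglyMeasurable
      (by filter_upwards [habs v] with s hs
          rw [abs_pow]; exact pow_le_one₀ (abs_nonneg _) hs)
  have hintfν : ∀ f : Fin d → Fin n,
      Integrable (fun y : Fin n → ℝ => ∏ v, (y v) ^ (m f v)) (Measure.pi μi) :=
    fun f => aux_pi_integrable μi (fun v s => s ^ (m f v)) (fun v => hginti v _)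
  have expandν : ∫ y, (∑ i, y i) ^ d ∂(Measure.pi μi)
      = ∑ f : Fin d → Fin n, ∏ v, ∫ s, s ^ (m f v) ∂(μi v) := by
    calc ∫ y, (∑ i, y i) ^ d ∂(Measure.pi μi)
        = ∫ y, ∑ f : Fin d → Fin n, ∏ v, (y v) ^ (m f v) ∂(Measure.pi μi) := by
          congr 1; funext y; exact point y
      _ = ∑ f : Fin d → Fin n, ∫ y, ∏ v, (y v) ^ (m f v) ∂(Measure.pi μi) :=
          integral_finset_sum _ (fun f _ => hintfν f)
      _ = ∑ f : Fin d → Fin n, ∏ v, ∫ s, s ^ (m f v) ∂(μi v) :=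
          Finset.sum_congr rfl (fun f _ => aux_pi_integral μi _)
  have hEq : ∫ ω, (∑ i, x i ω) ^ d ∂μ = ∫ y, (∑ i, y i) ^ d ∂(Measure.pi μi) := by
    rw [expandμ, expandν]
  -- MGF bound
  set t : ℝ := Real.sqrt ((d:ℝ) / n) with htdef
  have ht2 : t ^ 2 = (d:ℝ) / n := Real.sq_sqrt (by positivity)
  have ht0 : 0 < t := Real.sqrt_pos.2 (by positivity)
  have hexpint : ∀ c : ℝ, Integrable (fun y : Fin n → ℝ => Real.exp (c * ∑ i, y i)) (Measure.pi μi) := by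
    intro c
    have heq : (fun y : Fin n → ℝ => Real.exp (c * ∑ i, y i))
        = fun y => ∏ i, Real.exp (c * y i) := by
      funext y; rw [Finset.mul_sum, Real.exp_sum]
    rw [heq]
    exact aux_pi_integrable μi (fun i s => Real.exp (c * s)) (fun i =>
      aux_integrable ((measurable_id.const_mul c).exp).aestronglyMeasurable (C := Real.exp |c|)
        (by filter_upwards [habs i] with s hs
            rw [abs_of_nonneg (Real.exp_pos _).le]
            apply Real.exp_le_exp.2
            calc c * s ≤ |c * s| := le_abs_self _
              _ = |c| * |s| := abs_mul c s
              _ ≤ |c| * 1 := mul_le_mul_of_nonneg_left hs (abs_nonneg c)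
              _ = |c| := mul_one _))
  have hexple : ∀ c : ℝ, ∫ y, Real.exp (c * ∑ i, y i) ∂(Measure.pi μi) ≤ Real.cosh c ^ n := by
    intro c
    calc ∫ y, Real.exp (c * ∑ i, y i) ∂(Measure.pi μi) = ∫ y, ∏ i, Real.exp (c * y i) ∂(Measure.pi μi) := by
          congr 1; funext y; rw [Finset.mul_sum, Real.exp_sum]
      _ = ∏ i, ∫ s, Real.exp (c * s) ∂(μi i) := aux_pi_integral μi (fun i s => Real.exp (c * s))
      _ ≤ ∏ _i : Fin n, Real.cosh c :=
          Finset.prod_le_prod (fun i _ => integral_nonneg (fun s => (Real.exp_pos _).le))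
            (fun i _ => aux_mgf (μi i) (hai i) (hmean' i) c)
      _ = Real.cosh c ^ n := by rw [Finset.prod_const]; simp
  have hSd_int : Integrable (fun y : Fin n → ℝ => (∑ i, y i) ^ d) (Measure.pi μi) := by
    have heq : (fun y : Fin n → ℝ => (∑ i, y i) ^ d)
        = fun y => ∑ f : Fin d → Fin n, ∏ v, (y v) ^ (m f v) := by
      funext y; exact point y
    rw [heq]
    exact integrable_finset_sum _ (fun f _ => hintfν f)
  have hpt : ∀ y : Fin n → ℝ, (∑ i, y i) ^ d ≤
      ((d.factorial : ℝ) / t ^ d) * (Real.exp (t * ∑ i, y i) + Real.exp (-t * ∑ i, y i)) := by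
    intro y
    set s := ∑ i, y i with hsdef
    have h1 : (t * |s|) ^ d / (d.factorial : ℝ) ≤ Real.exp (t * |s|) :=
      Real.pow_div_factorial_le_exp _ (by positivity) d
    have h2 : Real.exp (t * |s|) ≤ Real.exp (t * s) + Real.exp (-t * s) := by
      rcases abs_cases s with ⟨h, _⟩ | ⟨h, _⟩
      · rw [h]; exact le_add_of_nonneg_right (Real.exp_pos _).le
      · rw [h, show t * -s = -t * s by ring]
        exact le_add_of_nonneg_left (Real.exp_pos _).le
    have h3 : s ^ d = |s| ^ d := by
      rw [← abs_pow, abs_of_nonneg (heven.pow_nonneg s)]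
    have htd : (0:ℝ) < t ^ d := pow_pos ht0 d
    have hfd : (0:ℝ) < (d.factorial : ℝ) := by positivity
    have h4 : t ^ d * |s| ^ d ≤ (d.factorial:ℝ) * (Real.exp (t*s) + Real.exp (-t*s)) := by
      have h5 := (div_le_iff₀ hfd).1 h1
      calc t ^ d * |s| ^ d = (t * |s|) ^ d := (mul_pow t _ d).symm
        _ ≤ Real.exp (t * |s|) * d.factorial := h5
        _ ≤ (Real.exp (t*s) + Real.exp (-t*s)) * d.factorial :=
            mul_le_mul_of_nonneg_right h2 hfd.le
        _ = (d.factorial:ℝ) * (Real.exp (t*s) + Real.exp (-t*s)) := mul_comm _ _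
    rw [h3]
    calc |s| ^ d = (t ^ d * |s| ^ d) / t ^ d := by field_simp
      _ ≤ ((d.factorial:ℝ) * (Real.exp (t*s) + Real.exp (-t*s))) / t ^ d := by gcongr
      _ = ((d.factorial:ℝ) / t ^ d) * (Real.exp (t*s) + Real.exp (-t*s)) := by ring
  have hmoment : ∫ ω, (∑ i, x i ω) ^ d ∂μ
      ≤ ((d.factorial:ℝ) / t ^ d) * (2 * Real.exp ((d:ℝ)/2)) := by
    rw [hEq]
    have hcosh2 : Real.cosh t ^ n ≤ Real.exp ((d:ℝ)/2) := by
      calc Real.cosh t ^ n ≤ Real.exp (t ^ 2 / 2) ^ n :=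
            pow_le_pow_left₀ (Real.cosh_pos (x := t)).le (Real.cosh_le_exp_half_sq t) n
        _ = Real.exp ((d:ℝ)/2) := by
            rw [← Real.exp_nat_mul]; congr 1; rw [ht2]; field_simp [hnR.ne']
    calc ∫ y, (∑ i, y i) ^ d ∂(Measure.pi μi)
        ≤ ∫ y, ((d.factorial:ℝ) / t ^ d)
            * (Real.exp (t * ∑ i, y i) + Real.exp (-t * ∑ i, y i)) ∂(Measure.pi μi) :=
          integral_mono hSd_int (((hexpint t).add (hexpint (-t))).const_mul _) hpt
      _ = ((d.factorial:ℝ)/t^d) * (∫ y, Real.exp (t * ∑ i, y i) ∂(Measure.pi μi)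
            + ∫ y, Real.exp (-t * ∑ i, y i) ∂(Measure.pi μi)) := by
          rw [integral_const_mul, integral_add (hexpint t) (hexpint (-t))]
      _ ≤ ((d.factorial:ℝ)/t^d) * (Real.cosh t ^ n + Real.cosh (-t) ^ n) := by
          have := add_le_add (hexple t) (hexple (-t))
          apply mul_le_mul_of_nonneg_left this (by positivity)
      _ = ((d.factorial:ℝ)/t^d) * (2 * Real.cosh t ^ n) := by rw [Real.cosh_neg]; ring
      _ ≤ ((d.factorial:ℝ)/t^d) * (2 * Real.exp ((d:ℝ)/2)) := by
          apply mul_le_mul_of_nonneg_left (by linarith) (by positivity)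
  -- Markov
  have hXmeas : Measurable fun ω => (∑ i, x i ω) ^ d :=
    (Finset.measurable_sum Finset.univ (fun i _ => hmeas i)).pow_const d
  have hXint : Integrable (fun ω => (∑ i, x i ω) ^ d) μ := by
    apply aux_integrable hXmeas.aestronglyMeasurable (C := (n:ℝ) ^ d)
    filter_upwards [hball] with ω hω
    rw [abs_pow]
    apply pow_le_pow_left₀ (abs_nonneg _) _ d
    calc |∑ i, x i ω| ≤ ∑ i, |x i ω| := Finset.abs_sum_le_sum_abs _ _
      _ ≤ ∑ _i : Fin n, (1:ℝ) := Finset.sum_le_sum (fun i _ => hω i)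
      _ = n := by simp
  have hnonneg : 0 ≤ᵐ[μ] fun ω => (∑ i, x i ω) ^ d :=
    Filter.Eventually.of_forall (fun ω => heven.pow_nonneg _)
  have markov := mul_meas_ge_le_integral_of_nonneg hnonneg hXint ((ε * n) ^ d)
  have hsub : {ω | ε * n ≤ |∑ i, x i ω|} ⊆ {ω | (ε * n) ^ d ≤ (∑ i, x i ω) ^ d} := by
    intro ω hω
    simp only [Set.mem_setOf_eq] at *
    calc (ε * n) ^ d ≤ |∑ i, x i ω| ^ d := pow_le_pow_left₀ (by positivity) hω d
      _ = (∑ i, x i ω) ^ d := by rw [← abs_pow, abs_of_nonneg (heven.pow_nonneg _)]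
  have hεn : (0:ℝ) < (ε * n) ^ d := by positivity
  -- final numeric bound
  have RHSbound : ((d.factorial:ℝ) / t ^ d) * (2 * Real.exp ((d:ℝ)/2)) / (ε * n) ^ d ≤
      4 * Real.sqrt (Real.pi * d) * (δ / (ε ^ 2 * Real.exp 1)) ^ ((δ * n) / 2 : ℝ) := by
    have hδn : δ * (n:ℝ) = d := by rw [hδ, div_mul_cancel₀ _ hnR.ne']
    have hexpo : ((δ * n) / 2 : ℝ) = (k : ℝ) := by rw [hδn, hd2k]; ring
    have hbase : (δ / (ε ^ 2 * Real.exp 1)) ^ ((δ * n) / 2 : ℝ)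
        = (δ / (ε ^ 2 * Real.exp 1)) ^ (k:ℕ) := by
      rw [hexpo, Real.rpow_natCast]
    rw [hbase]
    have h9 : ∀ D : ℝ, D ^ d = (D ^ 2) ^ k := fun D => by rw [hk', pow_mul]
    have htd : t ^ d = ((d:ℝ)/n) ^ k := by rw [h9 t, ht2]
    have hεnd : (ε * (n:ℝ)) ^ d = ((ε*(n:ℝ))^2) ^ k := h9 _
    have hexp2 : Real.exp ((d:ℝ)/2) = Real.exp 1 ^ k := by
      rw [← Real.exp_nat_mul]; congr 1; rw [hd2k]; ring
    rw [htd, hεnd, hexp2, hδ]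
    have hfle := aux_factorial_le d hd
    rw [div_mul_eq_mul_div, div_div, div_le_iff₀ (by positivity)]
    have hε2 : (0:ℝ) < ε ^ 2 * Real.exp 1 := by positivity
    have hcollapse : (((d:ℝ)/n / (ε^2 * Real.exp 1)) ^ k) * (((d:ℝ)/n) ^ k * ((ε*(n:ℝ))^2) ^ k)
        = ((d:ℝ)^2 / Real.exp 1) ^ k := by
      rw [← mul_pow, ← mul_pow]
      congr 1
      field_simp
    calc (d.factorial:ℝ) * (2 * Real.exp 1 ^ k)
        ≤ (2 * Real.sqrt Real.pi * Real.sqrt d * ((d:ℝ)/Real.exp 1)^d)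
            * (2 * Real.exp 1 ^ k) := mul_le_mul_of_nonneg_right hfle (by positivity)
      _ = 4 * Real.sqrt (Real.pi * d) * (((d:ℝ)/Real.exp 1)^d * Real.exp 1 ^ k) := by
          rw [Real.sqrt_mul (le_of_lt Real.pi_pos)]; ring
      _ = 4 * Real.sqrt (Real.pi * d) * (((d:ℝ)^2/Real.exp 1) ^ k) := by
          rw [h9 ((d:ℝ)/Real.exp 1), ← mul_pow]
          congr 2
          rw [div_pow, sq (Real.exp 1), ← div_div, div_mul_cancel₀ _ (Real.exp_pos 1).ne']
      _ = 4 * Real.sqrt (Real.pi * d)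
            * ((((d:ℝ)/n / (ε^2 * Real.exp 1)) ^ k) * (((d:ℝ)/n) ^ k * ((ε*(n:ℝ))^2) ^ k)) := by
          rw [hcollapse]
      _ = 4 * Real.sqrt (Real.pi * d) * ((d:ℝ)/n / (ε^2 * Real.exp 1)) ^ k
            * (((d:ℝ)/n) ^ k * ((ε*(n:ℝ))^2) ^ k) := by ring
  calc μ {ω | ε * n ≤ |∑ i, x i ω|}
      ≤ μ {ω | (ε * n) ^ d ≤ (∑ i, x i ω) ^ d} := measure_mono hsub
    _ ≤ ENNReal.ofReal (4 * Real.sqrt (Real.pi * d)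
          * (δ / (ε ^ 2 * Real.exp 1)) ^ ((δ * n) / 2 : ℝ)) := by
        rw [← ENNReal.ofReal_toReal (measure_ne_top μ {ω | (ε * n) ^ d ≤ (∑ i, x i ω) ^ d})]
        apply ENNReal.ofReal_le_ofReal
        have h1 : (μ {ω | (ε * n) ^ d ≤ (∑ i, x i ω) ^ d}).toReal
            ≤ (∫ ω, (∑ i, x i ω) ^ d ∂μ) / (ε * n) ^ d := by
          rw [le_div_iff₀ hεn, mul_comm]
          exact markov
        calc (μ {ω | (ε * n) ^ d ≤ (∑ i, x i ω) ^ d}).toReal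
            ≤ (∫ ω, (∑ i, x i ω) ^ d ∂μ) / (ε * n) ^ d := h1
          _ ≤ ((d.factorial:ℝ) / t ^ d) * (2 * Real.exp ((d:ℝ)/2)) / (ε * n) ^ d := by
              gcongr
          _ ≤ 4 * Real.sqrt (Real.pi * d)
              * (δ / (ε ^ 2 * Real.exp 1)) ^ ((δ * n) / 2 : ℝ) := RHSbound
end

section
/- Let C be an [n, Rn, δn]_q linear code. For any ε ≥ 2(q−1)·√( ((q−1)/q)·((q−1)/q − δ) ), the number of nonzero codewords of C that are not ε-biased is at most q²δn². -/
set_option maxHeartbeats 1000000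

/-- The character sum `∑ i, ω^{tr(a·x i)}` where `ω = e^{2πi/p}` and `tr` is the
field trace from `F_q` to `F_p`. -/
noncomputable def charSum (p : ℕ) {Fq : Type*} [Field Fq] [Fintype Fq] [Algebra (ZMod p) Fq]
    {ι : Type*} [Fintype ι] (a : Fq) (x : ι → Fq) : ℂ :=
  ∑ i, Complex.exp (2 * Real.pi * Complex.I * ((Algebra.trace (ZMod p) Fq (a * x i)).val : ℂ) / p)

section CharLemmas
variable (p : ℕ) [Fact p.Prime] {Fq : Type*} [Field Fq] [Fintype Fq] [Algebra (ZMod p) Fq]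

noncomputable def psiq : AddChar Fq ℂ :=
  (ZMod.stdAddChar (N := p)).compAddMonoidHom (Algebra.trace (ZMod p) Fq).toAddMonoidHom

lemma psiq_apply (x : Fq) :
    psiq p x = Complex.exp (2 * Real.pi * Complex.I * ((Algebra.trace (ZMod p) Fq x).val : ℂ) / p) := by
  haveI : NeZero p := ⟨(Fact.out : p.Prime).ne_zero⟩
  show ZMod.stdAddChar _ = _
  rw [ZMod.stdAddChar_apply, ZMod.toCircle_apply]
  norm_num

lemma psiq_abs (x : Fq) : ‖psiq p x‖ = 1 := by
  haveI : NeZero p := ⟨(Fact.out : p.Prime).ne_zero⟩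
  show ‖(((ZMod.toCircle _ : Circle)) : ℂ)‖ = 1
  exact Circle.norm_coe _

lemma psiq_ne_one : psiq p (Fq := Fq) ≠ 1 := by
  haveI : NeZero p := ⟨(Fact.out : p.Prime).ne_zero⟩
  haveI : FiniteDimensional (ZMod p) Fq := Module.Finite.of_finite
  obtain ⟨x0, hx0⟩ := Algebra.trace_surjective (ZMod p) Fq 1
  intro h
  have h1 : psiq p x0 = 1 := by rw [h]; rfl
  have : ZMod.stdAddChar (N := p) (1 : ZMod p) = 1 := by
    rw [← hx0]; exact h1
  have h2 : ZMod.stdAddChar (N := p) (1 : ZMod p) = ZMod.stdAddChar (N := p) 0 := by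
    rw [this, AddChar.map_zero_eq_one]
  have := ZMod.injective_stdAddChar h2
  exact one_ne_zero this

lemma psiq_sum_zero {a : Fq} (ha : a ≠ 0) : ∑ t : Fq, psiq p (a * t) = 0 := by
  have h1 : ∑ t : Fq, psiq p (a * t) = ∑ t : Fq, psiq p t :=
    Equiv.sum_comp (Equiv.mulLeft₀ a ha) (fun t => psiq p t)
  rw [h1]
  exact AddChar.sum_eq_zero_of_ne_one (psiq_ne_one p)

lemma charSum_eq_psiq {ι : Type*} [Fintype ι] (a : Fq) (c : ι → Fq) :
    charSum p a c = ∑ i, psiq p (a * c i) := by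
  unfold charSum
  exact Finset.sum_congr rfl fun i _ => (psiq_apply p _).symm

end CharLemmas

open Finset

section Comb
variable {n : ℕ} {Fq : Type*} [Fintype Fq] [DecidableEq Fq] [Nonempty Fq]

/-- number of coordinates where `c` equals `t` -/
def cntf (c : Fin n → Fq) (t : Fq) : ℕ := (univ.filter fun i => c i = t).card

/-- number of coordinates where `y` and `z` agree -/
def agrf (y z : Fin n → Fq) : ℕ := (univ.filter fun i => y i = z i).card

lemma agrf_self (y : Fin n → Fq) : agrf y y = n := by
  simp [agrf]

lemma cntf_le (c : Fin n → Fq) (t : Fq) : cntf c t ≤ n := by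
  simpa [cntf] using (card_filter_le univ (fun i => c i = t)).trans_eq (by simp)

lemma sum_cntf (c : Fin n → Fq) : ∑ t : Fq, cntf c t = n := by
  have := Finset.card_eq_sum_card_fiberwise (f := c) (s := univ) (t := univ)
    (fun i _ => mem_univ (c i))
  simpa [cntf] using this.symm

lemma agrf_add_dist (y z : Fin n → Fq) : agrf y z + hammingDist y z = n := by
  have h := Finset.card_filter_add_card_filter_not (s := (univ : Finset (Fin n)))
    (p := fun i => y i = z i)
  simp only [Finset.card_univ, Fintype.card_fin] at h
  simpa [agrf, hammingDist] using h

lemma sum_ind_mul_ind (u w : Fq) :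
    ∑ a : Fq, (if u = a then (1:ℝ) else 0) * (if w = a then 1 else 0)
      = if u = w then 1 else 0 := by
  have h : ∀ a : Fq, (if u = a then (1:ℝ) else 0) * (if w = a then 1 else 0)
      = if u = a then (if w = a then (1:ℝ) else 0) else 0 := by
    intro a; split <;> simp
  rw [Finset.sum_congr rfl fun a _ => h a, Finset.sum_ite_eq]
  simp [eq_comm]

lemma sum_ind (u : Fq) : ∑ a : Fq, (if u = a then (1:ℝ) else 0) = 1 := by
  rw [Finset.sum_ite_eq]; simp

lemma ip_eval (t0 : Fq) (α : ℝ) (y z : Fin n → Fq) :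
    ∑ x : Fin n × Fq,
      ((if y x.1 = x.2 then (1:ℝ) else 0) - α * (if t0 = x.2 then 1 else 0)
          - (1-α)/(Fintype.card Fq))
        * ((if z x.1 = x.2 then (1:ℝ) else 0) - α * (if t0 = x.2 then 1 else 0)
          - (1-α)/(Fintype.card Fq))
    = (agrf y z : ℝ) - α * ((cntf y t0 : ℝ) + (cntf z t0 : ℝ))
        + n * (α^2 - (1-α)^2/(Fintype.card Fq)) := by
  have hq0 : (0:ℝ) < (Fintype.card Fq : ℝ) := by
    exact_mod_cast Fintype.card_pos
  set Q : ℝ := (Fintype.card Fq : ℝ) with hQ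
  set β : ℝ := (1-α)/Q with hβ
  rw [Fintype.sum_prod_type]
  simp only []
  have key : ∀ i : Fin n,
      (∑ a : Fq, ((if y i = a then (1:ℝ) else 0) - α * (if t0 = a then 1 else 0) - β)
        * ((if z i = a then (1:ℝ) else 0) - α * (if t0 = a then 1 else 0) - β))
      = (if y i = z i then (1:ℝ) else 0)
          - α * ((if y i = t0 then (1:ℝ) else 0) + (if z i = t0 then (1:ℝ) else 0))
          + (α^2 - (1-α)^2/Q) := by
    intro i
    have expand : ∀ a : Fq,
        ((if y i = a then (1:ℝ) else 0) - α * (if t0 = a then 1 else 0) - β)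
          * ((if z i = a then (1:ℝ) else 0) - α * (if t0 = a then 1 else 0) - β)
        = (if y i = a then (1:ℝ) else 0) * (if z i = a then 1 else 0)
          + α^2 * ((if t0 = a then (1:ℝ) else 0) * (if t0 = a then 1 else 0))
          + β^2
          + (α*β) * (if t0 = a then (1:ℝ) else 0)
          + (α*β) * (if t0 = a then (1:ℝ) else 0)
          - α * ((if y i = a then (1:ℝ) else 0) * (if t0 = a then 1 else 0))
          - β * (if y i = a then (1:ℝ) else 0)
          - α * ((if t0 = a then (1:ℝ) else 0) * (if z i = a then 1 else 0))
          - β * (if z i = a then (1:ℝ) else 0) := by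
      intro a; ring
    rw [Finset.sum_congr rfl fun a _ => expand a]
    simp only [Finset.sum_add_distrib, Finset.sum_sub_distrib, ← Finset.mul_sum,
      Finset.sum_const, nsmul_eq_mul]
    have e1 : ∑ a : Fq, (if y i = a then (1:ℝ) else 0) * (if z i = a then 1 else 0)
        = if y i = z i then 1 else 0 := sum_ind_mul_ind _ _
    have e2 : ∑ a : Fq, (if t0 = a then (1:ℝ) else 0) * (if t0 = a then 1 else 0)
        = 1 := by rw [sum_ind_mul_ind]; simp
    have e3 : ∑ a : Fq, (if y i = a then (1:ℝ) else 0) * (if t0 = a then 1 else 0)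
        = if y i = t0 then 1 else 0 := sum_ind_mul_ind _ _
    have e4 : ∑ a : Fq, (if t0 = a then (1:ℝ) else 0) * (if z i = a then 1 else 0)
        = if z i = t0 then 1 else 0 := by rw [sum_ind_mul_ind]; simp [eq_comm]
    rw [e1, e2, e3, e4]
    simp only [sum_ind, Finset.card_univ, ← hQ]
    have hQne : Q ≠ 0 := ne_of_gt hq0
    set A1 := (if y i = z i then (1:ℝ) else 0) with hA1
    set A2 := (if y i = t0 then (1:ℝ) else 0) with hA2
    set A3 := (if z i = t0 then (1:ℝ) else 0) with hA3
    rw [hβ]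
    field_simp
    ring
  rw [Finset.sum_congr rfl fun i _ => key i]
  simp only [Finset.sum_add_distrib, Finset.sum_sub_distrib, ← Finset.mul_sum,
    Finset.sum_const, nsmul_eq_mul, Finset.sum_boole, Fintype.card_fin, Finset.card_univ]
  simp only [agrf, cntf]
  ring

end Comb

section Ball
variable {n : ℕ} {Fq : Type*} [Fintype Fq] [DecidableEq Fq] [Nonempty Fq]

set_option maxHeartbeats 1000000 in
lemma ball_bound (q d : ℕ) (hq : 2 ≤ q) (hcard : Fintype.card Fq = q) (hd : 1 ≤ d) (hn : 1 ≤ n)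
    (hdn : q * d ≤ (q - 1) * n) (t0 : Fq) (L : Finset (Fin n → Fq))
    (hdist : ∀ c ∈ L, ∀ c' ∈ L, c ≠ c' → (d : ℝ) ≤ hammingDist c c')
    (hclose : ∀ c ∈ L, Real.sqrt ((((q:ℝ)-1)*n) * (((q:ℝ)-1)*n - q*d)) < q * cntf c t0 - n) :
    (L.card : ℝ) ≤ ((q:ℝ) - 1) * n * d := by
  have hqR1 : (1:ℝ) ≤ (q:ℝ) - 1 := by
    have : (2:ℝ) ≤ q := by exact_mod_cast hq
    linarith
  have hq0R : (0:ℝ) < q := by linarith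
  rcases Nat.eq_zero_or_pos L.card with h0 | hM
  · rw [h0]
    push_cast
    have h1 : (0:ℝ) ≤ (n:ℝ) := Nat.cast_nonneg n
    have h2 : (0:ℝ) ≤ (d:ℝ) := Nat.cast_nonneg d
    have := mul_nonneg (mul_nonneg (by linarith : (0:ℝ) ≤ (q:ℝ)-1) h1) h2
    linarith
  set qR : ℝ := (q:ℝ) with hqRdef
  set ar : ℝ := (qR - 1) * n with har
  set kr : ℝ := ar * (ar - qR * d) with hkr
  clear_value qR ar kr
  have harpos : (0:ℝ) < ar := by
    rw [har]
    have : (1:ℝ) ≤ (n:ℝ) := by exact_mod_cast hn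
    nlinarith
  have hard : qR * d ≤ ar := by
    rw [har, hqRdef]
    have hcast : (((q-1)*n : ℕ) : ℝ) = ((q:ℝ)-1)*n := by
      push_cast [Nat.cast_sub (by omega : 1 ≤ q)]
      ring
    calc (q:ℝ) * d = ((q*d : ℕ) : ℝ) := by push_cast; ring
      _ ≤ (((q-1)*n : ℕ) : ℝ) := by exact_mod_cast hdn
      _ = ((q:ℝ)-1)*n := hcast
  have hkr0 : (0:ℝ) ≤ kr := by
    rw [hkr]
    apply mul_nonneg harpos.le
    linarith
  set m : ℝ := (L.card : ℝ) with hm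
  clear_value m
  have hm1 : (1:ℝ) ≤ m := by rw [hm]; exact_mod_cast hM
  have hm0 : (0:ℝ) < m := by linarith
  set tR : ℝ := ∑ c ∈ L, (cntf c t0 : ℝ) with htR
  clear_value tR
  -- step 1 : per-codeword integrality bound
  have step1 : ∀ c ∈ L, Real.sqrt (kr + qR) ≤ qR * (cntf c t0 : ℝ) - n := by
    intro c hc
    have h1 : Real.sqrt kr < qR * (cntf c t0 : ℝ) - n := hclose c hc
    have h2 : (0:ℝ) ≤ qR * (cntf c t0 : ℝ) - n := (Real.sqrt_nonneg _).trans h1.le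
    set w : ℕ := cntf c t0 with hw
    set z : ℤ := q * w - n with hz
    have hzR : ((z:ℤ):ℝ) = qR * (w:ℝ) - n := by rw [hz, hqRdef]; push_cast; ring
    have hkz : kr < ((z:ℤ):ℝ)^2 := by
      rw [hzR]
      calc kr = Real.sqrt kr ^ 2 := (Real.sq_sqrt hkr0).symm
        _ < (qR * (w:ℝ) - n)^2 := by
            apply pow_lt_pow_left₀ h1 (Real.sqrt_nonneg _) (by norm_num)
    set krZ : ℤ := ((q:ℤ)-1)*n*(((q:ℤ)-1)*n - q*d) with hkrZ
    have hkrZR : ((krZ:ℤ):ℝ) = kr := by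
      rw [hkrZ, hkr, har, hqRdef]; push_cast; ring
    have hkzZ : krZ < z^2 := by
      have : ((krZ:ℤ):ℝ) < ((z^2 : ℤ):ℝ) := by rw [hkrZR]; push_cast; exact hkz
      exact_mod_cast this
    have hdvd : ((q:ℤ)) ∣ (z^2 - krZ) := by
      refine ⟨q*w^2 - 2*n*w + (2-q)*n^2 + (q-1)*n*d, ?_⟩
      rw [hz, hkrZ]; ring
    have hqle : (q:ℤ) ≤ z^2 - krZ := Int.le_of_dvd (by linarith) hdvd
    have hfin : kr + qR ≤ (qR * (w:ℝ) - n)^2 := by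
      have h' : ((q:ℕ):ℝ) ≤ (z:ℝ)^2 - (krZ:ℝ) := by exact_mod_cast hqle
      rw [hzR, hkrZR] at h'
      rw [← hqRdef] at h'
      linarith
    calc Real.sqrt (kr + qR) ≤ Real.sqrt ((qR * (w:ℝ) - n)^2) := Real.sqrt_le_sqrt hfin
      _ = qR * (w:ℝ) - n := Real.sqrt_sq h2
  -- step 2 : averaged bound
  have step2 : m * Real.sqrt (kr + qR) ≤ qR * tR - m * n := by
    have hsum := Finset.sum_le_sum step1
    rw [Finset.sum_const, nsmul_eq_mul] at hsum
    have heq : ∑ c ∈ L, (qR * (cntf c t0 : ℝ) - n) = qR * tR - m * n := by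
      rw [Finset.sum_sub_distrib, ← Finset.mul_sum, Finset.sum_const, nsmul_eq_mul, htR, hm]
    rw [heq] at hsum
    rw [← hm] at hsum
    exact hsum
  set X : ℝ := qR * tR / m - n with hX
  clear_value X
  have hXs : Real.sqrt (kr + qR) ≤ X := by
    rw [hX]
    have h1 : Real.sqrt (kr + qR) ≤ (qR * tR - m * n)/m := (le_div_iff₀ hm0).mpr (by linarith [step2])
    have h2 : (qR * tR - m * n)/m = qR * tR / m - n := by field_simp
    linarith [h1, h2.symm.le]
  have hX0 : (0:ℝ) ≤ X := (Real.sqrt_nonneg _).trans hXs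
  have hX2 : kr + qR ≤ X^2 := by
    calc kr + qR = Real.sqrt (kr + qR) ^ 2 := (Real.sq_sqrt (by positivity)).symm
      _ ≤ X^2 := pow_le_pow_left₀ (Real.sqrt_nonneg _) hXs 2
  set α : ℝ := X / ar with hα
  set E : ℝ := α^2 - (1-α)^2/qR with hE
  clear_value α E
  set v : (Fin n → Fq) → (Fin n × Fq) → ℝ := fun c x =>
    ((if c x.1 = x.2 then (1:ℝ) else 0) - α * (if t0 = x.2 then 1 else 0) - (1-α)/qR) with hv
  have hIP : ∀ y z : Fin n → Fq,
      (∑ x : Fin n × Fq, v y x * v z x)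
      = (agrf y z : ℝ) - α * ((cntf y t0 : ℝ) + (cntf z t0 : ℝ)) + n * E := by
    intro y z
    have h := ip_eval t0 α y z
    rw [hcard] at h
    rw [hv, hE, hqRdef]
    exact h
  have hpos : (0:ℝ) ≤ ∑ c ∈ L, ∑ c' ∈ L,
      ((agrf c c' : ℝ) - α * ((cntf c t0 : ℝ) + (cntf c' t0 : ℝ)) + n * E) := by
    have h1 : ∀ x : Fin n × Fq, (∑ c ∈ L, v c x)^2 = ∑ c ∈ L, ∑ c' ∈ L, v c x * v c' x :=
      fun x => by rw [pow_two, Finset.sum_mul_sum]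
    have hcalc : ∑ c ∈ L, ∑ c' ∈ L,
        ((agrf c c' : ℝ) - α * ((cntf c t0 : ℝ) + (cntf c' t0 : ℝ)) + n * E)
        = ∑ x : Fin n × Fq, (∑ c ∈ L, v c x)^2 := by
      calc ∑ c ∈ L, ∑ c' ∈ L,
            ((agrf c c' : ℝ) - α * ((cntf c t0 : ℝ) + (cntf c' t0 : ℝ)) + n * E)
          = ∑ c ∈ L, ∑ c' ∈ L, ∑ x : Fin n × Fq, v c x * v c' x :=
            Finset.sum_congr rfl fun c _ => Finset.sum_congr rfl fun c' _ => (hIP c c').symm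
        _ = ∑ c ∈ L, ∑ x : Fin n × Fq, ∑ c' ∈ L, v c x * v c' x :=
            Finset.sum_congr rfl fun c _ => Finset.sum_comm
        _ = ∑ x : Fin n × Fq, ∑ c ∈ L, ∑ c' ∈ L, v c x * v c' x := Finset.sum_comm
        _ = ∑ x : Fin n × Fq, (∑ c ∈ L, v c x)^2 :=
            Finset.sum_congr rfl fun x _ => (h1 x).symm
    rw [hcalc]
    exact Finset.sum_nonneg fun x _ => sq_nonneg _
  -- bound the agreement double sum
  have hagr : ∑ c ∈ L, ∑ c' ∈ L, (agrf c c' : ℝ) ≤ m*n + m*(m-1)*((n:ℝ)-d) := by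
    have per : ∀ c ∈ L, ∑ c' ∈ L, (agrf c c' : ℝ) ≤ (n:ℝ) + (m-1)*((n:ℝ)-d) := by
      intro c hc
      rw [← Finset.sum_erase_add L _ hc, agrf_self]
      have h2 : ∑ c' ∈ L.erase c, (agrf c c' : ℝ) ≤ (m-1)*((n:ℝ)-d) := by
        have hb : ∀ c' ∈ L.erase c, (agrf c c' : ℝ) ≤ (n:ℝ)-d := by
          intro c' hc'
          have hne : c' ≠ c := Finset.ne_of_mem_erase hc'
          have hc'L : c' ∈ L := Finset.mem_of_mem_erase hc'
          have hd' := hdist c hc c' hc'L (Ne.symm hne)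
          have hsum : (agrf c c' : ℝ) + (hammingDist c c' : ℝ) = n := by
            exact_mod_cast congrArg (Nat.cast : ℕ → ℝ) (agrf_add_dist c c')
          linarith
        calc ∑ c' ∈ L.erase c, (agrf c c' : ℝ) ≤ ∑ _c' ∈ L.erase c, ((n:ℝ)-d) :=
              Finset.sum_le_sum hb
          _ = ((L.erase c).card : ℝ) * ((n:ℝ)-d) := by rw [Finset.sum_const, nsmul_eq_mul]
          _ = (m-1)*((n:ℝ)-d) := by
              rw [Finset.card_erase_of_mem hc, hm, Nat.cast_sub hM]
              push_cast
              ring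
      linarith
    calc ∑ c ∈ L, ∑ c' ∈ L, (agrf c c' : ℝ) ≤ ∑ _c ∈ L, ((n:ℝ) + (m-1)*((n:ℝ)-d)) :=
          Finset.sum_le_sum per
      _ = m * ((n:ℝ) + (m-1)*((n:ℝ)-d)) := by rw [Finset.sum_const, nsmul_eq_mul, hm]
      _ = m*n + m*(m-1)*((n:ℝ)-d) := by ring
  have hcsum : ∑ c ∈ L, ∑ c' ∈ L, ((cntf c t0 : ℝ) + (cntf c' t0 : ℝ)) = 2*m*tR := by
    have per : ∀ c ∈ L, ∑ c' ∈ L, ((cntf c t0 : ℝ) + (cntf c' t0 : ℝ))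
        = m * (cntf c t0 : ℝ) + tR := by
      intro c _
      rw [Finset.sum_add_distrib, Finset.sum_const, nsmul_eq_mul, htR, hm]
    rw [Finset.sum_congr rfl per, Finset.sum_add_distrib, ← Finset.mul_sum, Finset.sum_const,
      nsmul_eq_mul, htR, hm]
    ring
  have hconst : ∑ c ∈ L, ∑ c' ∈ L, ((n:ℝ) * E) = m * m * ((n:ℝ)*E) := by
    rw [Finset.sum_const, Finset.sum_const, hm]
    simp only [nsmul_eq_mul]
    push_cast
    ring
  have I1 : (0:ℝ) ≤ m*n + m*(m-1)*((n:ℝ)-d) - 2*α*m*tR + m*m*((n:ℝ)*E) := by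
    have hsplit : ∑ c ∈ L, ∑ c' ∈ L,
        ((agrf c c' : ℝ) - α * ((cntf c t0 : ℝ) + (cntf c' t0 : ℝ)) + n * E)
        = (∑ c ∈ L, ∑ c' ∈ L, (agrf c c' : ℝ))
          - α * (∑ c ∈ L, ∑ c' ∈ L, ((cntf c t0 : ℝ) + (cntf c' t0 : ℝ)))
          + ∑ c ∈ L, ∑ c' ∈ L, ((n:ℝ) * E) := by
      simp only [Finset.sum_add_distrib, Finset.sum_sub_distrib, Finset.mul_sum, mul_add]
    rw [hsplit, hcsum, hconst] at hpos
    linarith [hagr, hpos]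
  -- the key algebraic identity
  have hZpos : (0:ℝ) < qR * ar := mul_pos hq0R harpos
  have hID2 : (m*n + m*(m-1)*((n:ℝ)-d) - 2*α*m*tR + m*m*((n:ℝ)*E)) * (qR*ar)
      = m*(m*(ar^2 - X^2) - (m-1)*(qR*ar*d)) := by
    clear hclose hdist hIP hpos hagr hcsum hconst step1 step2 hXs hX2 hX0 I1 hv
    clear v
    have hn0 : (n:ℝ) ≠ 0 := by positivity
    have hq1 : qR - 1 ≠ 0 := by rw [hqRdef]; intro h; rw [hqRdef] at hqR1; linarith
    have hqne : qR ≠ 0 := by rw [hqRdef]; positivity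
    have hmne : m ≠ 0 := ne_of_gt hm0
    have harne : ar ≠ 0 := ne_of_gt harpos
    rw [hE, hα, hX, har]
    field_simp
    ring
  have h5 : (0:ℝ) ≤ m*(m*(ar^2 - X^2) - (m-1)*(qR*ar*d)) := by
    rw [← hID2]
    exact mul_nonneg I1 hZpos.le
  have h6 : (0:ℝ) ≤ m*(ar^2 - X^2) - (m-1)*(qR*ar*d) :=
    (mul_nonneg_iff_of_pos_left hm0).mp h5
  have h7 : ar^2 - X^2 ≤ qR*ar*d - qR := by
    have hkr' : kr = ar^2 - qR*ar*d := by rw [hkr]; ring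
    rw [hkr'] at hX2
    linarith
  have h8 : m*(ar^2 - X^2) ≤ m*(qR*ar*d - qR) := mul_le_mul_of_nonneg_left h7 hm0.le
  have h9 : m * qR ≤ (ar*d) * qR := by nlinarith [h6, h8]
  exact le_of_mul_le_mul_right h9 hq0R
end Ball


section Reduce
variable (p : ℕ) [Fact p.Prime] {Fq : Type*} [Field Fq] [Fintype Fq] [DecidableEq Fq]
  [Algebra (ZMod p) Fq] {n : ℕ}

lemma charSum_group (a : Fq) (c : Fin n → Fq) :
    charSum p a c = ∑ t : Fq, ((cntf c t : ℕ) : ℂ) * psiq p (a * t) := by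
  rw [charSum_eq_psiq]
  rw [← Finset.sum_fiberwise_of_maps_to (g := c) (fun i _ => Finset.mem_univ (c i))
    (fun i => psiq p (a * c i))]
  refine Finset.sum_congr rfl fun t _ => ?_
  have hcongr : ∀ i ∈ Finset.univ.filter (fun i => c i = t),
      psiq p (a * c i) = psiq p (a * t) := by
    intro i hi
    rw [(Finset.mem_filter.mp hi).2]
  rw [Finset.sum_congr rfl hcongr, Finset.sum_const, nsmul_eq_mul]
  rfl

lemma exists_close (q : ℕ) (hq : 2 ≤ q) (hcard : Fintype.card Fq = q) (K : ℝ) (hK0 : 0 ≤ K)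
    (c : Fin n → Fq) (ε : ℝ)
    (hKε : 2*((q:ℝ)-1)*Real.sqrt K ≤ q*(ε*n))
    (hchar : ∃ a : Fq, a ≠ 0 ∧ ε*n < ‖charSum p a c‖) :
    ∃ t : Fq, Real.sqrt K < q * (cntf c t : ℝ) - n := by
  have hq0 : (0:ℝ) < q := by positivity
  have h2q : (0:ℝ) < 2*((q:ℝ)-1) := by
    have : (2:ℝ) ≤ q := by exact_mod_cast hq
    linarith
  obtain ⟨a, ha, habs⟩ := hchar
  have h1 := charSum_group p a c
  have hzero : ∑ t : Fq, ((n:ℂ)/q) * psiq p (a*t) = 0 := by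
    rw [← Finset.mul_sum, psiq_sum_zero p ha, mul_zero]
  have h2 : charSum p a c = ∑ t : Fq, (((cntf c t : ℝ) - (n:ℝ)/q : ℝ) : ℂ) * psiq p (a*t) := by
    calc charSum p a c
        = (∑ t : Fq, ((cntf c t : ℕ) : ℂ) * psiq p (a*t))
          - ∑ t : Fq, ((n:ℂ)/q) * psiq p (a*t) := by rw [hzero, sub_zero, h1]
      _ = ∑ t : Fq, (((cntf c t : ℝ) - (n:ℝ)/q : ℝ) : ℂ) * psiq p (a*t) := by
          rw [← Finset.sum_sub_distrib]
          refine Finset.sum_congr rfl fun t _ => ?_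
          push_cast
          ring
  have h3 : ‖charSum p a c‖ ≤ ∑ t : Fq, |(cntf c t : ℝ) - (n:ℝ)/q| := by
    rw [h2]
    refine le_trans (norm_sum_le _ _) ?_
    refine Finset.sum_le_sum fun t _ => ?_
    rw [norm_mul, psiq_abs, mul_one, Complex.norm_real, Real.norm_eq_abs]
  obtain ⟨tmax, -, htmax⟩ := Finset.exists_max_image (Finset.univ : Finset Fq)
    (fun t => cntf c t) ⟨(1:Fq), Finset.mem_univ _⟩
  obtain ⟨tmin, -, htmin⟩ := Finset.exists_min_image (Finset.univ : Finset Fq)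
    (fun t => cntf c t) ⟨(1:Fq), Finset.mem_univ _⟩
  have hsumcnt : ∑ t : Fq, cntf c t = n := sum_cntf c
  have hminle : q * cntf c tmin ≤ n := by
    calc q * cntf c tmin = ∑ _t : Fq, cntf c tmin := by
          rw [Finset.sum_const, Finset.card_univ, hcard, smul_eq_mul]
      _ ≤ ∑ t : Fq, cntf c t := Finset.sum_le_sum fun t _ => htmin t (Finset.mem_univ t)
      _ = n := hsumcnt
  have hmaxge : n ≤ q * cntf c tmax := by
    calc n = ∑ t : Fq, cntf c t := hsumcnt.symm
      _ ≤ ∑ _t : Fq, cntf c tmax := Finset.sum_le_sum fun t _ => htmax t (Finset.mem_univ t)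
      _ = q * cntf c tmax := by rw [Finset.sum_const, Finset.card_univ, hcard, smul_eq_mul]
  set x : Fq → ℝ := fun t => (cntf c t : ℝ) - (n:ℝ)/q with hx
  have hxmax : ∀ t, x t ≤ x tmax := by
    intro t
    have := htmax t (Finset.mem_univ t)
    have : (cntf c t : ℝ) ≤ (cntf c tmax : ℝ) := by exact_mod_cast this
    simp only [hx]
    linarith
  have hxmax0 : 0 ≤ x tmax := by
    have : (n:ℝ) ≤ q * cntf c tmax := by exact_mod_cast hmaxge
    simp only [hx]
    rw [sub_nonneg, div_le_iff₀ hq0]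
    linarith
  have hxmin : x tmin ≤ 0 := by
    have : (q:ℝ) * cntf c tmin ≤ n := by exact_mod_cast hminle
    simp only [hx]
    rw [sub_nonpos, le_div_iff₀ hq0]
    linarith
  have hsx : ∑ t : Fq, x t = 0 := by
    simp only [hx]
    rw [Finset.sum_sub_distrib, Finset.sum_const, Finset.card_univ, hcard, nsmul_eq_mul]
    have : ∑ t : Fq, (cntf c t : ℝ) = (n:ℝ) := by
      rw [← Nat.cast_sum, hsumcnt]
    rw [this]
    field_simp
    ring
  have habs_le : ∑ t : Fq, |x t| ≤ 2*((q:ℝ)-1)*(x tmax) := by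
    have h4 : ∀ t : Fq, |x t| = 2 * max (x t) 0 - x t := by
      intro t
      rcases le_total 0 (x t) with h | h
      · rw [abs_of_nonneg h, max_eq_left h]; ring
      · rw [abs_of_nonpos h, max_eq_right h]; ring
    have hmaxsum : ∑ t : Fq, max (x t) 0 ≤ ((q:ℝ)-1)*(x tmax) := by
      have herase : ∑ t : Fq, max (x t) 0 = ∑ t ∈ Finset.univ.erase tmin, max (x t) 0 :=
        (Finset.sum_erase _ (by rw [max_eq_right hxmin])).symm
      rw [herase]
      calc ∑ t ∈ Finset.univ.erase tmin, max (x t) 0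
          ≤ ∑ _t ∈ Finset.univ.erase tmin, x tmax :=
            Finset.sum_le_sum fun t _ => max_le (hxmax t) hxmax0
        _ = ((Finset.univ.erase tmin).card : ℝ) * x tmax := by
            rw [Finset.sum_const, nsmul_eq_mul]
        _ = ((q:ℝ)-1)*(x tmax) := by
            rw [Finset.card_erase_of_mem (Finset.mem_univ tmin), Finset.card_univ, hcard,
              Nat.cast_sub (by omega : 1 ≤ q)]
            norm_num
    calc ∑ t : Fq, |x t| = ∑ t : Fq, (2 * max (x t) 0 - x t) :=
          Finset.sum_congr rfl fun t _ => h4 t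
      _ = 2 * ∑ t : Fq, max (x t) 0 - ∑ t : Fq, x t := by
          rw [Finset.sum_sub_distrib, ← Finset.mul_sum]
      _ = 2 * ∑ t : Fq, max (x t) 0 := by rw [hsx]; ring
      _ ≤ 2*(((q:ℝ)-1)*(x tmax)) := by linarith [hmaxsum]
      _ = 2*((q:ℝ)-1)*(x tmax) := by ring
  have hfinal : ε*n < 2*((q:ℝ)-1)*(x tmax) := lt_of_lt_of_le habs (h3.trans habs_le)
  refine ⟨tmax, ?_⟩
  have hmul := mul_lt_mul_of_pos_left hfinal hq0
  have hkey : 2*((q:ℝ)-1)*Real.sqrt K < 2*((q:ℝ)-1)*((q:ℝ)*(x tmax)) := by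
    calc 2*((q:ℝ)-1)*Real.sqrt K ≤ q*(ε*n) := hKε
      _ < (q:ℝ)*(2*((q:ℝ)-1)*(x tmax)) := hmul
      _ = 2*((q:ℝ)-1)*((q:ℝ)*(x tmax)) := by ring
  have hlt : Real.sqrt K < (q:ℝ)*(x tmax) := (mul_lt_mul_iff_right₀ h2q).mp hkey
  have hqx : (q:ℝ)*(x tmax) = q * (cntf c tmax : ℝ) - n := by
    simp only [hx]
    field_simp
  linarith [hlt, hqx.le, hqx.ge]

end Reduce

lemma hammingNorm_le_n {n : ℕ} {Fq : Type*} [DecidableEq Fq] [Zero Fq] (c : Fin n → Fq) :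
    hammingNorm c ≤ n := by
  simpa using hammingNorm_le_card_fintype (x := c)

theorem stmt14 (p r n : ℕ) [Fact p.Prime] {Fq : Type*} [Field Fq] [Fintype Fq] [DecidableEq Fq]
    [Algebra (ZMod p) Fq] (q : ℕ) (hq : Fintype.card Fq = q) (hqr : q = p ^ r)
    (R δ : ℝ) (hδ0 : 0 ≤ δ) (hδq : δ ≤ ((q : ℝ) - 1) / q)
    (C : Submodule Fq (Fin n → Fq))
    (hrank : (Module.finrank Fq C : ℝ) = R * n)
    (hdistlb : ∀ c ∈ C, c ≠ 0 → δ * n ≤ (hammingNorm c : ℝ))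
    (hdisteq : ∃ c ∈ C, c ≠ 0 ∧ (hammingNorm c : ℝ) = δ * n)
    (ε : ℝ)
    (hε : 2 * ((q : ℝ) - 1) * Real.sqrt ((((q : ℝ) - 1) / q) * (((q : ℝ) - 1) / q - δ)) ≤ ε) :
    (Set.ncard {c : Fin n → Fq | c ∈ C ∧ c ≠ 0 ∧
        ¬ ∀ a : Fq, a ≠ 0 → ‖charSum p a c‖ ≤ ε * n} : ℝ)
      ≤ (q : ℝ) ^ 2 * δ * (n : ℝ) ^ 2 := by
  classical
  have hq2 : 2 ≤ q := by rw [← hq]; exact Fintype.one_lt_card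
  have hq0 : (0:ℝ) < q := by positivity
  obtain ⟨c0, hc0C, hc0ne, hc0len⟩ := hdisteq
  set d : ℕ := hammingNorm c0 with hd
  have hdR : (d:ℝ) = δ * n := hc0len
  have hd1 : 1 ≤ d := by
    rcases Nat.eq_zero_or_pos d with h | h
    · exact absurd (hammingNorm_eq_zero.mp h) hc0ne
    · exact h
  have hn1 : 1 ≤ n := le_trans hd1 (hammingNorm_le_n c0)
  have hqdnR : (q:ℝ) * d ≤ ((q:ℝ)-1) * n := by
    rw [hdR]
    have h1 : (q:ℝ) * (δ * n) ≤ (q:ℝ) * ((((q:ℝ)-1)/q) * n) := by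
      apply mul_le_mul_of_nonneg_left _ hq0.le
      apply mul_le_mul_of_nonneg_right hδq (Nat.cast_nonneg n)
    calc (q:ℝ) * (δ * n) ≤ (q:ℝ) * ((((q:ℝ)-1)/q) * n) := h1
      _ = ((q:ℝ)-1) * n := by field_simp
  have hqdn : q * d ≤ (q-1) * n := by
    have : ((q*d : ℕ) : ℝ) ≤ (((q-1)*n : ℕ) : ℝ) := by
      push_cast [Nat.cast_sub (by omega : 1 ≤ q)]
      push_cast at hqdnR ⊢
      linarith
    exact_mod_cast this
  set S : Set (Fin n → Fq) := {c : Fin n → Fq | c ∈ C ∧ c ≠ 0 ∧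
      ¬ ∀ a : Fq, a ≠ 0 → ‖charSum p a c‖ ≤ ε * n} with hS
  have hfin : S.Finite := Set.toFinite _
  set F : Finset (Fin n → Fq) := hfin.toFinset with hF
  set Lt : Fq → Finset (Fin n → Fq) := fun t =>
    F.filter (fun c => Real.sqrt ((((q:ℝ)-1)*n) * (((q:ℝ)-1)*n - q*d)) < q * (cntf c t : ℝ) - n)
    with hLt
  have hK0 : (0:ℝ) ≤ (((q:ℝ)-1)*n) * (((q:ℝ)-1)*n - q*d) := by
    apply mul_nonneg
    · have : (2:ℝ) ≤ q := by exact_mod_cast hq2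
      have : (1:ℝ) ≤ n := by exact_mod_cast hn1
      nlinarith [show (2:ℝ) ≤ q from by exact_mod_cast hq2]
    · linarith [hqdnR]
  have hKε : 2*((q:ℝ)-1)*Real.sqrt ((((q:ℝ)-1)*n) * (((q:ℝ)-1)*n - q*d)) ≤ q*(ε*n) := by
    have hkreq : (((q:ℝ)-1)*n) * (((q:ℝ)-1)*n - q*d)
        = ((q:ℝ)*n)^2 * ((((q:ℝ)-1)/q) * (((q:ℝ)-1)/q - δ)) := by
      rw [hdR]
      field_simp
    rw [hkreq, Real.sqrt_mul (sq_nonneg _), Real.sqrt_sq (by positivity)]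
    have hstep : 2*((q:ℝ)-1) * Real.sqrt ((((q:ℝ)-1)/q) * (((q:ℝ)-1)/q - δ)) * ((q:ℝ)*n)
        ≤ ε * ((q:ℝ)*n) := by
      apply mul_le_mul_of_nonneg_right hε (by positivity)
    calc 2*((q:ℝ)-1)*((q:ℝ)*n * Real.sqrt ((((q:ℝ)-1)/q) * (((q:ℝ)-1)/q - δ)))
        = 2*((q:ℝ)-1) * Real.sqrt ((((q:ℝ)-1)/q) * (((q:ℝ)-1)/q - δ)) * ((q:ℝ)*n) := by ring
      _ ≤ ε * ((q:ℝ)*n) := hstep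
      _ = q*(ε*n) := by ring
  have hsub : F ⊆ Finset.univ.biUnion Lt := by
    intro c hc
    have hcS : c ∈ S := hfin.mem_toFinset.mp hc
    obtain ⟨hcC, hcne, hbias⟩ := hcS
    push_neg at hbias
    obtain ⟨a, ha, habs⟩ := hbias
    obtain ⟨t, ht⟩ := exists_close p q hq2 hq _ hK0 c ε hKε ⟨a, ha, habs⟩
    exact Finset.mem_biUnion.mpr ⟨t, Finset.mem_univ t, Finset.mem_filter.mpr ⟨hc, ht⟩⟩
  have hball : ∀ t : Fq, ((Lt t).card : ℝ) ≤ ((q:ℝ)-1)*n*d := by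
    intro t
    apply ball_bound q d hq2 hq hd1 hn1 hqdn t
    · intro c hc c' hc' hne
      have hcS : c ∈ S := hfin.mem_toFinset.mp (Finset.mem_of_mem_filter c hc)
      have hc'S : c' ∈ S := hfin.mem_toFinset.mp (Finset.mem_of_mem_filter c' hc')
      have hsub : c - c' ∈ C := Submodule.sub_mem C hcS.1 hc'S.1
      have hsubne : c - c' ≠ 0 := sub_ne_zero.mpr hne
      have := hdistlb (c - c') hsub hsubne
      rw [← hdR] at this
      rwa [hammingDist_comm, hammingDist_eq_hammingNorm, neg_add_eq_sub]
    · intro c hc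
      exact (Finset.mem_filter.mp hc).2
  have hcount : (S.ncard : ℝ) ≤ (q:ℝ) * (((q:ℝ)-1)*n*d) := by
    rw [Set.ncard_eq_toFinset_card S hfin]
    calc ((hfin.toFinset.card : ℕ) : ℝ)
        ≤ (((Finset.univ.biUnion Lt).card : ℕ) : ℝ) := by
          exact_mod_cast Finset.card_le_card hsub
      _ ≤ ((∑ t : Fq, (Lt t).card : ℕ) : ℝ) := by exact_mod_cast Finset.card_biUnion_le
      _ = ∑ t : Fq, ((Lt t).card : ℝ) := by push_cast; rfl
      _ ≤ ∑ _t : Fq, ((q:ℝ)-1)*n*d := Finset.sum_le_sum fun t _ => hball t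
      _ = (q:ℝ) * (((q:ℝ)-1)*n*d) := by
          rw [Finset.sum_const, Finset.card_univ, hq, nsmul_eq_mul]
  calc (S.ncard : ℝ) ≤ (q:ℝ) * (((q:ℝ)-1)*n*d) := hcount
    _ ≤ (q:ℝ)^2 * δ * n^2 := by
        rw [hdR]
        have h1 : (0:ℝ) ≤ δ * n := by positivity
        have h2 : ((q:ℝ)-1) ≤ q := by linarith
        have h3 : (0:ℝ) ≤ (q:ℝ)*n := by positivity
        nlinarith [mul_nonneg hq0.le (Nat.cast_nonneg n : (0:ℝ) ≤ n)]
end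

section
/- For any prime power q, any 0 < γ < 1/4, and any real x with 0 < x < (1/q)^{1/γ}, the q-ary entropy function satisfies H_q(x) < −(1 + 2γ)·x·log_q(x). -/
theorem stmt16 (q : ℕ) (hq : IsPrimePow q) (γ x : ℝ) (hγ0 : 0 < γ) (hγ4 : γ < 1 / 4)
    (hx0 : 0 < x) (hx : x < (1 / (q : ℝ)) ^ (1 / γ : ℝ)) :
    x * Real.logb q ((q : ℝ) - 1) - x * Real.logb q x - (1 - x) * Real.logb q (1 - x)
      < -(1 + 2 * γ) * (x * Real.logb q x) := by
  have hq2 : (2 : ℝ) ≤ (q : ℝ) := by exact_mod_cast hq.two_le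
  have hq0 : (0 : ℝ) < (q : ℝ) := by linarith
  have hc : 0 < Real.log q := Real.log_pos (by linarith)
  set c := Real.log q with hcdef
  -- x < 1
  have hbase : (1 / (q : ℝ)) < 1 := by
    rw [div_lt_one hq0]; linarith
  have hx1 : x < 1 := lt_of_lt_of_le hx
    (le_of_lt (Real.rpow_lt_one (by positivity) hbase (by positivity)))
  have h1x : 0 < 1 - x := by linarith
  -- γ * (-log x) > log q
  have hlogx : Real.log x < (1 / γ) * Real.log (1 / (q : ℝ)) := by
    calc Real.log x < Real.log ((1 / (q : ℝ)) ^ (1 / γ : ℝ)) :=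
          Real.log_lt_log hx0 hx
      _ = (1 / γ) * Real.log (1 / (q : ℝ)) := Real.log_rpow (by positivity) _
  have hlog1q : Real.log (1 / (q : ℝ)) = -c := by
    rw [one_div, Real.log_inv]
  have hγL : c < γ * (-Real.log x) := by
    rw [hlog1q] at hlogx
    have : Real.log x < -(c / γ) := by
      calc Real.log x < (1/γ) * (-c) := hlogx
        _ = -(c/γ) := by ring
    have h2 : γ * Real.log x < γ * (-(c/γ)) := by
      exact mul_lt_mul_of_pos_left this hγ0
    have h3 : γ * (-(c/γ)) = -c := by field_simp
    nlinarith
  -- -(1-x) log(1-x) ≤ x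
  have h1 : -((1 - x) * Real.log (1 - x)) ≤ x := by
    have hlog : Real.log (1 / (1 - x)) ≤ 1 / (1 - x) - 1 :=
      Real.log_le_sub_one_of_pos (by positivity)
    rw [one_div, Real.log_inv] at hlog
    have : -Real.log (1 - x) ≤ (1 - x)⁻¹ - 1 := hlog
    have h2 : (1 - x) * (-Real.log (1 - x)) ≤ (1 - x) * ((1 - x)⁻¹ - 1) :=
      mul_le_mul_of_nonneg_left this (le_of_lt h1x)
    have h3 : (1 - x) * ((1 - x)⁻¹ - 1) = x := by
      field_simp; ring
    nlinarith
  -- log(q-1) + 1 < 2 log q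
  have hq1 : (1 : ℝ) ≤ (q : ℝ) - 1 := by linarith
  have hq1pos : (0 : ℝ) < (q : ℝ) - 1 := by linarith
  have he3 : Real.exp 1 < 3 := by
    have := Real.exp_one_lt_d9; linarith
  have hkey2 : Real.log ((q : ℝ) - 1) + 1 < 2 * c := by
    have hmul : Real.exp 1 * ((q : ℝ) - 1) < (q : ℝ) * (q : ℝ) := by
      nlinarith [Real.exp_pos 1]
    have hlt : Real.log (Real.exp 1 * ((q : ℝ) - 1)) < Real.log ((q : ℝ) * (q : ℝ)) :=
      Real.log_lt_log (by positivity) hmul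
    rw [Real.log_mul (Real.exp_ne_zero 1) (ne_of_gt hq1pos), Real.log_exp,
      Real.log_mul (ne_of_gt hq0) (ne_of_gt hq0)] at hlt
    linarith
  -- main inequality on natural logs
  have key : x * Real.log ((q : ℝ) - 1) - x * Real.log x - (1 - x) * Real.log (1 - x)
      < -(1 + 2 * γ) * (x * Real.log x) := by
    nlinarith [mul_lt_mul_of_pos_left hkey2 hx0, mul_lt_mul_of_pos_left hγL hx0, h1]
  -- convert to logb
  have e1 : x * Real.logb q ((q : ℝ) - 1) - x * Real.logb q x - (1 - x) * Real.logb q (1 - x)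
      = (x * Real.log ((q : ℝ) - 1) - x * Real.log x - (1 - x) * Real.log (1 - x)) / c := by
    simp only [Real.logb]; ring
  have e2 : -(1 + 2 * γ) * (x * Real.logb q x)
      = (-(1 + 2 * γ) * (x * Real.log x)) / c := by
    simp only [Real.logb]; ring
  rw [e1, e2]
  exact (div_lt_div_iff_of_pos_right hc).mpr key
end
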